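/- arXiv:2509.17591 — 2 statements merged into one kernel-verified Lean document; each statement's English description precedes it below -/
import Mathlib

section
/- Let ≤_T be the graded order with X₂ > X₁. Let e ∈ 𝔽(r₁,r₂) and τ ∈ 𝓘, let U be the syndrome table afforded by τ and e, and suppose ω(e) ≤ t ≤ 4, t ≥ 1, t ≤ ⌊r₁/2⌋, t ≤ ⌊r₂/2⌋, and u_{(i,j)} ≠ 0 for some (i,j) with i + j = t. Let F = {f^(1),…,f^(d)} ⊆ L[X₁,X₂] be a minimal set of polynomials for the subarray of U indexed by B(2t+1): the defining points s^(i) = LP(f^(i)) satisfy s^(1)_1 > … > s^(d)_1 = 0 and 0 = s^(1)_2 < … < s^(d)_2; each f^(i) satisfies f^(i)[U]_k = 0 for every k ∈ B(2t+1) with s^(i) ⪯ k; and every nonzero g ∈ L[X₁,X₂] with LP(g) ∈ ∪_{i=1}^{d−1}{n : n ⪯ (s^(i)_1 − 1, s^(i+1)_2 − 1)} satisfies g[U]_k ≠ 0 for some k ∈ B(2t+1) with LP(g) ⪯ k. Then F is a Gröbner basis of the ideal Λ(U) with respect to ≤_T. -/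
/-!
Let `Z` be the set of error positions `(α₁ ^ p₁, α₂ ^ p₂)`, `I(Z)` the ideal of polynomials
vanishing on `Z` and `Δ` its footprint for the graded order, so `|Δ| ≤ |Z| = ω(e) ≤ t`. The
syndrome table is an exponential sum over `Z`, hence every element of `I(Z)` generates it.

Minimality places every exponent under the staircase of the `s⁽ⁱ⁾` in `Δ`, and, for `t ≤ 4`,
counting boxes inside `Δ` gives `s⁽ⁱ⁾ + Δ ⊆ B(2t+1)`; so `f⁽ⁱ⁾` annihilates `U` on `s⁽ⁱ⁾ + Δ`.
Every polynomial reduces modulo `I(Z)` to one supported on `Δ`, so testing `f⁽ⁱ⁾` against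
interpolating polynomials of the points of `Z` shows `f⁽ⁱ⁾ ∈ I(Z)`. Conversely, a generator of `U`
whose leading exponent lies under the staircase would contradict minimality.
-/

/-- A monomial order on ℕ × ℕ: a linear order compatible with addition
for which (0,0) is the least element. -/
structure MonOrd where
  le : ℕ × ℕ → ℕ × ℕ → Prop
  refl : ∀ a, le a a
  trans : ∀ a b c, le a b → le b c → le a c
  antisymm : ∀ a b, le a b → le b a → a = b
  total : ∀ a b, le a b ∨ le b a
  add_right : ∀ a b c, le a b → le (a + c) (b + c)
  zero_le : ∀ a, le (0, 0) a

/-- Strict version of a monomial order. -/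
def MonOrd.lt (T : MonOrd) (a b : ℕ × ℕ) : Prop := T.le a b ∧ a ≠ b

/-- `s` is the leading power product exponent of `f` w.r.t. `T`. -/
def IsLP {L : Type} [Field L] (T : MonOrd) (f : (ℕ × ℕ) →₀ L) (s : ℕ × ℕ) : Prop :=
  s ∈ f.support ∧ ∀ m ∈ f.support, T.le m s

/-- `f[U]_n`, computed with respect to a given leading exponent `s` of `f`. -/
noncomputable def fApp {L : Type} [Field L] (U : ℕ × ℕ → L) (f : (ℕ × ℕ) →₀ L)
    (s n : ℕ × ℕ) : L :=
  if s.1 ≤ n.1 ∧ s.2 ≤ n.2 then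
    ∑ m ∈ f.support, f m * U (m.1 + n.1 - s.1, m.2 + n.2 - s.2)
  else 0

/-- `f` generates the doubly periodic array `U`. -/
def GeneratesU {L : Type} [Field L] (T : MonOrd) (U : ℕ × ℕ → L) (f : (ℕ × ℕ) →₀ L) : Prop :=
  ∃ s, IsLP T f s ∧ ∀ n, fApp U f s n = 0

/-- `f` generates the finite subarray `u^l` of `U`. -/
def GeneratesUpTo {L : Type} [Field L] (T : MonOrd) (U : ℕ × ℕ → L) (l : ℕ × ℕ)
    (f : (ℕ × ℕ) →₀ L) : Prop :=
  ∃ s, IsLP T f s ∧ ∀ k, s.1 ≤ k.1 → s.2 ≤ k.2 → T.lt k l → fApp U f s k = 0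

/-- `U` is a doubly periodic array of period r₁ × r₂. -/
def DoublyPeriodic {L : Type} (r₁ r₂ : ℕ) (U : ℕ × ℕ → L) : Prop :=
  ∀ n m : ℕ × ℕ, n.1 % r₁ = m.1 % r₁ → n.2 % r₂ = m.2 % r₂ → U n = U m

/-- Evaluation of a bivariate polynomial at a point `(x, y)`. -/
noncomputable def polyEval {L : Type} [Field L] (f : (ℕ × ℕ) →₀ L) (x y : L) : L :=
  ∑ m ∈ f.support, f m * x ^ m.1 * y ^ m.2

/-- The syndrome table afforded by `τ` and `e`:  `u_n = e(α^(τ+n))`. -/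
noncomputable def synTable {F L : Type} [Field F] [Field L] [Algebra F L] {r₁ r₂ : ℕ}
    (α₁ α₂ : L) (τ : Fin r₁ × Fin r₂) (e : Fin r₁ × Fin r₂ → F) : ℕ × ℕ → L :=
  fun n => ∑ p : Fin r₁ × Fin r₂,
    algebraMap F L (e p) * (α₁ ^ ((τ.1 : ℕ) + n.1)) ^ (p.1 : ℕ)
      * (α₂ ^ ((τ.2 : ℕ) + n.2)) ^ (p.2 : ℕ)

/-- The weight ω(e): number of nonzero coefficients. -/
noncomputable def wt {F : Type} [Field F] {r₁ r₂ : ℕ} (e : Fin r₁ × Fin r₂ → F) : ℕ :=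
  {p | e p ≠ 0}.ncard

/-- The hyperbolic set B(δ) of amplitude δ inside {0,…,r₁−1} × {0,…,r₂−1}. -/
def hypB (r₁ r₂ δ : ℕ) : Set (ℕ × ℕ) :=
  {l | l.1 < r₁ ∧ l.2 < r₂ ∧ (l.1 + 1) * (l.2 + 1) ≤ δ ∧ l ≠ (δ - 1, 0) ∧ l ≠ (0, δ - 1)}

/-- The border set 𝔉 = {l ∈ B(2t+1) : 2t ≤ (l₁+1)(l₂+1)}. -/
def frontF (r₁ r₂ t : ℕ) : Set (ℕ × ℕ) :=
  {l ∈ hypB r₁ r₂ (2 * t + 1) | 2 * t ≤ (l.1 + 1) * (l.2 + 1)}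

/-- The lexicographic order with X₁ > X₂. -/
def lexMonOrd : MonOrd where
  le a b := a.1 < b.1 ∨ (a.1 = b.1 ∧ a.2 ≤ b.2)
  refl a := by omega
  trans a b c h1 h2 := by omega
  antisymm a b h1 h2 := by
    obtain ⟨a1, a2⟩ := a; obtain ⟨b1, b2⟩ := b
    simp_all only [Prod.mk.injEq]; omega
  total a b := by omega
  add_right a b c h := by
    obtain ⟨a1, a2⟩ := a; obtain ⟨b1, b2⟩ := b; obtain ⟨c1, c2⟩ := c
    simp_all only [Prod.mk_add_mk]; omega
  zero_le a := by
    obtain ⟨a1, a2⟩ := a; simp only []; omega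

/-- The (reverse) graded order with X₂ > X₁. -/
def grMonOrd : MonOrd where
  le a b := a.1 + a.2 < b.1 + b.2 ∨ (a.1 + a.2 = b.1 + b.2 ∧ a.2 ≤ b.2)
  refl a := by omega
  trans a b c h1 h2 := by omega
  antisymm a b h1 h2 := by
    obtain ⟨a1, a2⟩ := a; obtain ⟨b1, b2⟩ := b
    simp_all only [Prod.mk.injEq]; omega
  total a b := by omega
  add_right a b c h := by
    obtain ⟨a1, a2⟩ := a; obtain ⟨b1, b2⟩ := b; obtain ⟨c1, c2⟩ := c
    simp_all only [Prod.mk_add_mk]; omega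
  zero_le a := by
    obtain ⟨a1, a2⟩ := a; simp only []; omega

/-- The ideal (X₁^{r₁} − 1, X₂^{r₂} − 1) of L[X₁,X₂]. -/
noncomputable def periodIdeal (L : Type) [Field L] (r₁ r₂ : ℕ) :
    Ideal (AddMonoidAlgebra L (ℕ × ℕ)) :=
  Ideal.span {AddMonoidAlgebra.single (r₁, 0) 1 - 1, AddMonoidAlgebra.single (0, r₂) 1 - 1}

open Finset

section GradedOrder

/-- Total degree `k` occupies the ranks `k * k + k, …, k * k + 2 * k`, ordered by the exponent
of `X₂`. -/
def grRank (a : ℕ × ℕ) : ℕ := (a.1 + a.2) * (a.1 + a.2) + (a.1 + a.2) + a.2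

lemma grMonOrd_le_iff {a b : ℕ × ℕ} : grMonOrd.le a b ↔ grRank a ≤ grRank b := by
  obtain ⟨a₁, a₂⟩ := a
  obtain ⟨b₁, b₂⟩ := b
  change a₁ + a₂ < b₁ + b₂ ∨ (a₁ + a₂ = b₁ + b₂ ∧ a₂ ≤ b₂) ↔ _
  unfold grRank
  constructor
  · rintro (h | ⟨h, h₂⟩)
    · nlinarith
    · dsimp only
      rw [h]
      omega
  · intro h
    rcases lt_trichotomy (a₁ + a₂) (b₁ + b₂) with hlt | heq | hgt
    · exact Or.inl hlt
    · refine Or.inr ⟨heq, ?_⟩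
      dsimp only at h
      rw [heq] at h
      omega
    · dsimp only at h
      nlinarith

lemma grRank_lt_of_le_of_ne {a b : ℕ × ℕ} (h : grMonOrd.le a b) (hne : a ≠ b) :
    grRank a < grRank b :=
  (grMonOrd_le_iff.1 h).lt_of_ne fun heq =>
    hne (grMonOrd.antisymm a b h (grMonOrd_le_iff.2 heq.ge))

variable {L : Type} [Field L]

lemma exists_isLP_grMonOrd {f : (ℕ × ℕ) →₀ L} (hf : f ≠ 0) : ∃ s, IsLP grMonOrd f s := by
  obtain ⟨s, hs, hmax⟩ :=
    f.support.exists_max_image grRank (Finsupp.support_nonempty_iff.2 hf)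
  exact ⟨s, hs, fun m hm => grMonOrd_le_iff.2 (hmax m hm)⟩

lemma IsLP.eq {T : MonOrd} {f : (ℕ × ℕ) →₀ L} {s s' : ℕ × ℕ}
    (h : IsLP T f s) (h' : IsLP T f s') : s = s' :=
  T.antisymm s s' (h'.2 s h.1) (h.2 s' h'.1)

end GradedOrder

section Evaluation

variable {L : Type} [Field L]

noncomputable def evalAt (z : L × L) : ((ℕ × ℕ) →₀ L) →ₗ[L] L :=
  Finsupp.linearCombination L fun m => z.1 ^ m.1 * z.2 ^ m.2

lemma evalAt_apply (z : L × L) (f : (ℕ × ℕ) →₀ L) :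
    evalAt z f = ∑ m ∈ f.support, f m * (z.1 ^ m.1 * z.2 ^ m.2) := by
  rw [evalAt, Finsupp.linearCombination_apply, Finsupp.sum]
  rfl

lemma evalAt_mapDomain_add (z : L × L) (d : ℕ × ℕ) (f : (ℕ × ℕ) →₀ L) :
    evalAt z (f.mapDomain (· + d)) = z.1 ^ d.1 * z.2 ^ d.2 * evalAt z f := by
  rw [evalAt, Finsupp.linearCombination_mapDomain, Finsupp.linearCombination_apply,
    Finsupp.linearCombination_apply, Finsupp.sum, Finsupp.sum, Finset.mul_sum]
  refine Finset.sum_congr rfl fun m _ => ?_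
  simp only [Function.comp_apply, Prod.fst_add, Prod.snd_add, pow_add, smul_eq_mul]
  ring

noncomputable def evalOn (Z : Finset (L × L)) : ((ℕ × ℕ) →₀ L) →ₗ[L] (Z → L) :=
  LinearMap.pi fun z => evalAt z.1

lemma mem_ker_evalOn {Z : Finset (L × L)} {f : (ℕ × ℕ) →₀ L} :
    f ∈ LinearMap.ker (evalOn Z) ↔ ∀ z ∈ Z, evalAt z f = 0 := by
  simp only [LinearMap.mem_ker, funext_iff, evalOn, LinearMap.pi_apply, Pi.zero_apply,
    Subtype.forall]

noncomputable def evalAlgHom (z : L × L) : AddMonoidAlgebra L (ℕ × ℕ) →ₐ[L] L :=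
  AddMonoidAlgebra.lift L L (ℕ × ℕ)
    { toFun := fun m => z.1 ^ m.toAdd.1 * z.2 ^ m.toAdd.2
      map_one' := by simp
      map_mul' := fun a b => by
        simp only [toAdd_mul, Prod.fst_add, Prod.snd_add, pow_add]
        ring }

lemma evalAlgHom_ofCoeff (z : L × L) (f : (ℕ × ℕ) →₀ L) :
    evalAlgHom z (AddMonoidAlgebra.ofCoeff f) = evalAt z f := by
  rw [evalAlgHom, AddMonoidAlgebra.lift_apply, AddMonoidAlgebra.coeff_ofCoeff, evalAt,
    Finsupp.linearCombination_apply]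
  rfl

lemma evalAlgHom_single (z : L × L) (m : ℕ × ℕ) (c : L) :
    evalAlgHom z (AddMonoidAlgebra.single m c) = c * (z.1 ^ m.1 * z.2 ^ m.2) := by
  rw [evalAlgHom, AddMonoidAlgebra.lift_single, smul_eq_mul]
  rfl

/-- Normalise the product, over `w ∈ Z \ {z}`, of a linear form in one variable that vanishes at
`w` but not at `z`. -/
lemma exists_evalAt_eq_ite [DecidableEq L] (Z : Finset (L × L)) (z : L × L) :
    ∃ h : (ℕ × ℕ) →₀ L, ∀ w ∈ Z, evalAt w h = if w = z then 1 else 0 := by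
  let X₁ : AddMonoidAlgebra L (ℕ × ℕ) := AddMonoidAlgebra.single (1, 0) 1
  let X₂ : AddMonoidAlgebra L (ℕ × ℕ) := AddMonoidAlgebra.single (0, 1) 1
  let C (c : L) : AddMonoidAlgebra L (ℕ × ℕ) := AddMonoidAlgebra.single 0 c
  let sep (w : L × L) := if w.1 = z.1 then X₂ - C w.2 else X₁ - C w.1
  have eval_sep (v w : L × L) :
      evalAlgHom v (sep w) = if w.1 = z.1 then v.2 - w.2 else v.1 - w.1 := by
    split_ifs <;> simp [sep, X₁, X₂, C, *, evalAlgHom_single]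
  let p := ∏ w ∈ Z.erase z, sep w
  have eval_p (v : L × L) :
      evalAlgHom v p = ∏ w ∈ Z.erase z, if w.1 = z.1 then v.2 - w.2 else v.1 - w.1 := by
    simp only [p, map_prod, eval_sep]
  have hp : evalAlgHom z p ≠ 0 := by
    rw [eval_p, Finset.prod_ne_zero_iff]
    intro w hw
    have hwz := (Finset.mem_erase.1 hw).1
    split_ifs with h
    · exact sub_ne_zero.2 fun h₂ => hwz (Prod.ext h h₂.symm)
    · exact sub_ne_zero.2 fun h₁ => h h₁.symm
  refine ⟨((evalAlgHom z p)⁻¹ • p).coeff, fun w hw => ?_⟩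
  rw [← evalAlgHom_ofCoeff, AddMonoidAlgebra.ofCoeff_coeff, map_smul, smul_eq_mul]
  split_ifs with hwz
  · rw [hwz, inv_mul_cancel₀ hp]
  · rw [eval_p w, Finset.prod_eq_zero (Finset.mem_erase.2 ⟨hwz, hw⟩)
      (by split_ifs <;> exact sub_self _), mul_zero]

end Evaluation

section Footprint

variable {L : Type} [Field L]

/-- The footprint `Δ` of the ideal `ker (evalOn Z)` of polynomials vanishing on `Z`. -/
def footprint (Z : Finset (L × L)) : Set (ℕ × ℕ) :=
  {n | ∀ g ∈ LinearMap.ker (evalOn Z), ¬ IsLP grMonOrd g n}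

lemma isLowerSet_footprint (Z : Finset (L × L)) : IsLowerSet (footprint Z) := by
  classical
  intro n m hmn hn g hg hgm
  set d := n - m
  have hd : m + d = n := add_tsub_cancel_of_le hmn
  have hinj : Function.Injective (· + d) := add_left_injective d
  refine hn (g.mapDomain (· + d)) ?_ ⟨?_, fun u hu => ?_⟩
  · rw [mem_ker_evalOn] at hg ⊢
    intro z hz
    rw [evalAt_mapDomain_add, hg z hz, mul_zero]
  · rw [Finsupp.mapDomain_support_of_injective hinj, ← hd]
    exact Finset.mem_image_of_mem _ hgm.1
  · rw [Finsupp.mapDomain_support_of_injective hinj] at hu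
    obtain ⟨v, hv, rfl⟩ := Finset.mem_image.1 hu
    rw [← hd]
    exact grMonOrd.add_right v m d (hgm.2 v hv)

lemma mem_of_forall_single_mem {α R : Type*} [Semiring R] {M : Submodule R (α →₀ R)}
    {f : α →₀ R} (h : ∀ n ∈ f.support, Finsupp.single n 1 ∈ M) : f ∈ M := by
  rw [← f.sum_single]
  exact Submodule.sum_mem _ fun n hn => by
    rw [← Finsupp.smul_single_one]
    exact M.smul_mem _ (h n hn)

/-- A monomial outside the footprint is the leading monomial of an element of the ideal;
subtracting it leaves monomials of smaller `grRank`. -/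
lemma supported_footprint_sup_ker_evalOn (Z : Finset (L × L)) :
    Finsupp.supported L L (footprint Z) ⊔ LinearMap.ker (evalOn Z) = ⊤ := by
  set M := Finsupp.supported L L (footprint Z) ⊔ LinearMap.ker (evalOn Z)
  suffices hsingle : ∀ k m, grRank m = k → Finsupp.single m (1 : L) ∈ M from
    eq_top_iff.2 fun f _ => mem_of_forall_single_mem fun n _ => hsingle _ n rfl
  intro k
  induction k using Nat.strong_induction_on with
  | _ k ih =>
    intro m hmk
    by_cases hm : m ∈ footprint Z
    · refine Submodule.mem_sup_left ((Finsupp.mem_supported L _).2 ?_)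
      exact fun n hn => Finset.mem_singleton.1 (Finsupp.support_single_subset hn) ▸ hm
    simp only [footprint, Set.mem_ofPred_eq, not_forall, not_not] at hm
    obtain ⟨g, hg, hgm⟩ := hm
    have hgm0 : g m ≠ 0 := Finsupp.mem_support_iff.1 hgm.1
    set g' := (g m)⁻¹ • g
    have hg' : g' ∈ M := Submodule.mem_sup_right (Submodule.smul_mem _ _ hg)
    have hrest : Finsupp.single m 1 - g' ∈ M := by
      refine mem_of_forall_single_mem fun n hn => ih (grRank n) ?_ n rfl
      have hnm : n ≠ m := by
        rintro rfl
        simp [g', hgm0] at hn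
      have hng : n ∈ g.support := by
        by_contra hng
        simp [g', Finsupp.notMem_support_iff.1 hng, hnm.symm] at hn
      exact hmk ▸ grRank_lt_of_le_of_ne (hgm.2 n hng) hnm
    simpa using M.add_mem hrest hg'

lemma card_le_of_subset_footprint {Z : Finset (L × L)} {S : Finset (ℕ × ℕ)}
    (hS : ↑S ⊆ footprint Z) : S.card ≤ Z.card := by
  let φ := (evalOn Z).domRestrict (Finsupp.supported L L (S : Set (ℕ × ℕ)))
  have hφ : Function.Injective φ := by
    rintro ⟨f, hf⟩ ⟨g, hg⟩ hfg
    refine Subtype.ext (sub_eq_zero.1 ?_)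
    by_contra hne
    obtain ⟨s, hs⟩ := exists_isLP_grMonOrd hne
    have hker : f - g ∈ LinearMap.ker (evalOn Z) := by
      simpa [φ, sub_eq_zero] using hfg
    exact hS ((Finsupp.mem_supported L _).1 (Submodule.sub_mem _ hf hg) hs.1) _ hker hs
  have := LinearMap.finrank_le_finrank_of_injective hφ
  rw [(Finsupp.supportedEquivFinsupp (M := L) (R := L) (S : Set (ℕ × ℕ))).finrank_eq,
    Module.finrank_finsupp_self, Module.finrank_fintype_fun_eq_card, Fintype.card_coe] at this
  simpa only [Finset.coe_sort_coe, Fintype.card_coe] using this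

end Footprint

section ExpSum

variable {L : Type} [Field L] {ι : Type*} (P : Finset ι) (z : ι → L × L) (w : ι → L)

def expSum : ℕ × ℕ → L := fun n => ∑ i ∈ P, w i * ((z i).1 ^ n.1 * (z i).2 ^ n.2)

lemma fApp_expSum_add (f : (ℕ × ℕ) →₀ L) (s n : ℕ × ℕ) :
    fApp (expSum P z w) f s (s + n) =
      ∑ i ∈ P, w i * ((z i).1 ^ n.1 * (z i).2 ^ n.2) * evalAt (z i) f := by
  rw [fApp, if_pos ⟨Nat.le_add_right _ _, Nat.le_add_right _ _⟩]
  simp only [expSum, evalAt_apply, Prod.fst_add, Prod.snd_add, Finset.mul_sum]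
  rw [Finset.sum_comm]
  refine Finset.sum_congr rfl fun i _ => Finset.sum_congr rfl fun m _ => ?_
  rw [Nat.add_sub_assoc (Nat.le_add_right _ _), Nat.add_sub_assoc (Nat.le_add_right _ _),
    Nat.add_sub_cancel_left, Nat.add_sub_cancel_left, pow_add, pow_add]
  ring

lemma fApp_expSum_eq_zero {f : (ℕ × ℕ) →₀ L} (hf : ∀ i ∈ P, evalAt (z i) f = 0) (s k : ℕ × ℕ) :
    fApp (expSum P z w) f s k = 0 := by
  by_cases hsk : s ≤ k
  · rw [← add_tsub_cancel_of_le hsk, fApp_expSum_add]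
    exact Finset.sum_eq_zero fun i hi => by rw [hf i hi, mul_zero]
  · exact if_neg hsk

lemma sum_mul_fApp_expSum_add (f h : (ℕ × ℕ) →₀ L) (s : ℕ × ℕ) :
    ∑ n ∈ h.support, h n * fApp (expSum P z w) f s (s + n) =
      ∑ i ∈ P, w i * evalAt (z i) f * evalAt (z i) h := by
  simp only [fApp_expSum_add, evalAt_apply _ h, Finset.mul_sum]
  rw [Finset.sum_comm]
  refine Finset.sum_congr rfl fun i _ => Finset.sum_congr rfl fun n _ => ?_
  ring

/-- Test the annihilation against the interpolating polynomial of `z i`, reduced onto the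
footprint. -/
lemma evalAt_eq_zero_of_fApp_expSum_add_eq_zero [DecidableEq L] (hz : Set.InjOn z P)
    (hw : ∀ i ∈ P, w i ≠ 0) {f : (ℕ × ℕ) →₀ L} {s : ℕ × ℕ}
    (hf : ∀ n ∈ footprint (P.image z), fApp (expSum P z w) f s (s + n) = 0) {i : ι}
    (hi : i ∈ P) : evalAt (z i) f = 0 := by
  classical
  obtain ⟨h, hh⟩ := exists_evalAt_eq_ite (P.image z) (z i)
  have htop : h ∈ Finsupp.supported L L (footprint (P.image z)) ⊔
      LinearMap.ker (evalOn (P.image z)) := by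
    rw [supported_footprint_sup_ker_evalOn]
    exact Submodule.mem_top
  obtain ⟨h', hh', g, hg, rfl⟩ := Submodule.mem_sup.1 htop
  have hval : ∀ j ∈ P, evalAt (z j) h' = if j = i then 1 else 0 := by
    intro j hj
    have hzj := Finset.mem_image_of_mem z hj
    have hhj := hh _ hzj
    rw [map_add, mem_ker_evalOn.1 hg _ hzj, add_zero] at hhj
    rw [hhj]
    exact if_congr ⟨fun h => hz hj hi h, congrArg z⟩ rfl rfl
  have key := sum_mul_fApp_expSum_add P z w f h' s
  rw [Finset.sum_eq_zero fun n hn => by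
      rw [hf n ((Finsupp.mem_supported L h').1 hh' hn), mul_zero],
    Finset.sum_eq_single i (fun j hj hji => by rw [hval j hj, if_neg hji, mul_zero])
      (absurd hi), hval i hi, if_pos rfl, mul_one] at key
  exact (mul_eq_zero.1 key.symm).resolve_left (hw i hi)

end ExpSum

section Syndrome

variable {F L : Type} [Field F] [Field L] [Algebra F L] {r₁ r₂ : ℕ} {α₁ α₂ : L}

lemma injective_pow_pair (hα₁ : IsPrimitiveRoot α₁ r₁) (hα₂ : IsPrimitiveRoot α₂ r₂) :
    Function.Injective fun p : Fin r₁ × Fin r₂ => (α₁ ^ (p.1 : ℕ), α₂ ^ (p.2 : ℕ)) := by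
  intro p q h
  simp only [Prod.mk.injEq] at h
  exact Prod.ext (Fin.ext (hα₁.pow_inj p.1.isLt q.1.isLt h.1))
    (Fin.ext (hα₂.pow_inj p.2.isLt q.2.isLt h.2))

lemma synTable_eq_expSum (hα₁ : IsPrimitiveRoot α₁ r₁) (hα₂ : IsPrimitiveRoot α₂ r₂)
    (τ : Fin r₁ × Fin r₂) (e : Fin r₁ × Fin r₂ → F) :
    ∃ (P : Finset (Fin r₁ × Fin r₂)) (w : Fin r₁ × Fin r₂ → L), P.card = wt e ∧
      (∀ p ∈ P, w p ≠ 0) ∧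
      synTable α₁ α₂ τ e = expSum P (fun p => (α₁ ^ (p.1 : ℕ), α₂ ^ (p.2 : ℕ))) w := by
  classical
  refine ⟨univ.filter (e · ≠ 0),
    fun p => algebraMap F L (e p) * α₁ ^ ((τ.1 : ℕ) * p.1) * α₂ ^ ((τ.2 : ℕ) * p.2), ?_, ?_, ?_⟩
  · rw [wt, Set.ncard_eq_toFinset_card']
    congr
    ext
    simp
  · intro p hp
    refine mul_ne_zero (mul_ne_zero ((map_ne_zero _).2 (mem_filter.1 hp).2) ?_) ?_
    · exact pow_ne_zero _ (hα₁.ne_zero (Fin.pos p.1).ne')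
    · exact pow_ne_zero _ (hα₂.ne_zero (Fin.pos p.2).ne')
  · funext n
    rw [synTable, expSum, Finset.sum_filter]
    refine Finset.sum_congr rfl fun p _ => ?_
    split_ifs with hp
    · ring
    · rw [not_not.1 hp, map_zero, zero_mul, zero_mul]

end Syndrome

section Staircase

/-- Once `t ≤ 4` only finitely many cases remain; the bound fails for `t = 5`, `a = 3`, `b = 0`,
`n = (0, 2)`. -/
lemma hyperbolic_bound {t a b n₁ n₂ : ℕ} (ht : t ≤ 4) (hn : (n₁ + 1) * (n₂ + 1) ≤ t)
    (ha : a ≠ 0 → (n₁ + 1) * (n₂ + 1) + a * (b + 1) ≤ t + min (n₁ + 1) a * min (n₂ + 1) (b + 1))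
    (hb : b ≠ 0 → (n₁ + 1) * (n₂ + 1) + (a + 1) * b ≤ t + min (n₁ + 1) (a + 1) * min (n₂ + 1) b) :
    (a + n₁ + 1) * (b + n₂ + 1) ≤ 2 * t + 1 ∧ a + n₁ < 2 * t ∧ b + n₂ < 2 * t := by
  have hn₁ : n₁ < 4 := by nlinarith
  have hn₂ : n₂ < 4 := by nlinarith
  have ha₅ : a < 5 := by
    rcases Nat.eq_zero_or_pos a with h | h
    · omega
    · have := Nat.mul_le_mul (min_le_left (n₁ + 1) a) (min_le_left (n₂ + 1) (b + 1))
      nlinarith [ha h.ne']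
  have hb₅ : b < 5 := by
    rcases Nat.eq_zero_or_pos b with h | h
    · omega
    · have := Nat.mul_le_mul (min_le_left (n₁ + 1) (a + 1)) (min_le_left (n₂ + 1) b)
      nlinarith [hb h.ne']
  have key : ∀ t ∈ range 5, ∀ a ∈ range 5, ∀ b ∈ range 5, ∀ n₁ ∈ range 4, ∀ n₂ ∈ range 4,
      (n₁ + 1) * (n₂ + 1) ≤ t →
      (a ≠ 0 → (n₁ + 1) * (n₂ + 1) + a * (b + 1) ≤ t + min (n₁ + 1) a * min (n₂ + 1) (b + 1)) →
      (b ≠ 0 → (n₁ + 1) * (n₂ + 1) + (a + 1) * b ≤ t + min (n₁ + 1) (a + 1) * min (n₂ + 1) b) →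
      (a + n₁ + 1) * (b + n₂ + 1) ≤ 2 * t + 1 ∧ a + n₁ < 2 * t ∧ b + n₂ < 2 * t := by
    decide
  exact key t (mem_range.2 (by omega)) a (mem_range.2 ha₅) b (mem_range.2 hb₅) n₁
    (mem_range.2 hn₁) n₂ (mem_range.2 hn₂) hn ha hb

lemma card_Iic_nat_prod (c : ℕ × ℕ) : (Iic c).card = (c.1 + 1) * (c.2 + 1) := by
  rw [card_Iic_prod, Nat.card_Iic, Nat.card_Iic]

lemma box_add_box_le {D : Set (ℕ × ℕ)} (hD : IsLowerSet D) {t : ℕ}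
    (hcard : ∀ S : Finset (ℕ × ℕ), ↑S ⊆ D → S.card ≤ t) {c c' : ℕ × ℕ} (hc : c ∈ D)
    (hc' : c' ∈ D) :
    (c.1 + 1) * (c.2 + 1) + (c'.1 + 1) * (c'.2 + 1) ≤
      t + (min c.1 c'.1 + 1) * (min c.2 c'.2 + 1) := by
  have hIic : ∀ c ∈ D, ↑(Iic c) ⊆ D := fun c hc x hx => hD (mem_Iic.1 hx) hc
  have hinter : Iic c ∩ Iic c' = Iic (c ⊓ c') := by
    ext
    simp
  have hunion := hcard _ (by
    rw [coe_union]
    exact Set.union_subset (hIic c hc) (hIic c' hc'))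
  have := card_union_add_card_inter (Iic c) (Iic c')
  rw [hinter, card_Iic_nat_prod, card_Iic_nat_prod, card_Iic_nat_prod] at this
  exact this ▸ Nat.add_le_add_right hunion _

lemma add_mem_hypB {D : Set (ℕ × ℕ)} (hD : IsLowerSet D) {t r₁ r₂ : ℕ} (ht : t ≤ 4)
    (hr₁ : 2 * t ≤ r₁) (hr₂ : 2 * t ≤ r₂) (hcard : ∀ S : Finset (ℕ × ℕ), ↑S ⊆ D → S.card ≤ t)
    {a n : ℕ × ℕ} (hn : n ∈ D) (ha : a.1 ≠ 0 → (a.1 - 1, a.2) ∈ D)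
    (hb : a.2 ≠ 0 → (a.1, a.2 - 1) ∈ D) : a + n ∈ hypB r₁ r₂ (2 * t + 1) := by
  have hbox : (n.1 + 1) * (n.2 + 1) ≤ t :=
    card_Iic_nat_prod n ▸ hcard _ fun x hx => hD (mem_Iic.1 hx) hn
  obtain ⟨h₁, h₂, h₃⟩ := hyperbolic_bound (a := a.1) (b := a.2) ht hbox
    (fun h => by
      have := box_add_box_le hD hcard hn (ha h)
      rwa [← min_add_add_right, ← min_add_add_right, Nat.sub_add_cancel (Nat.pos_of_ne_zero h)]
        at this)
    (fun h => by
      have := box_add_box_le hD hcard hn (hb h)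
      rwa [← min_add_add_right, ← min_add_add_right, Nat.sub_add_cancel (Nat.pos_of_ne_zero h)]
        at this)
  simp only [hypB, Set.mem_ofPred_eq, Prod.fst_add, Prod.snd_add, ne_eq, Prod.ext_iff]
  omega

lemma eq_of_le_of_strictAnti_of_strictMono {d : ℕ} {s : Fin d → ℕ × ℕ}
    (h₁ : StrictAnti fun i => (s i).1) (h₂ : StrictMono fun i => (s i).2) {i j : Fin d}
    (h : s j ≤ s i) : j = i := by
  rcases lt_trichotomy j i with hji | hji | hji
  · exact absurd h.1 (h₁ hji).not_ge
  · exact hji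
  · exact absurd h.2 (h₂ hji).not_ge

lemma not_le_pred_fst {d : ℕ} {s : Fin d → ℕ × ℕ} (h₁ : StrictAnti fun i => (s i).1)
    (h₂ : StrictMono fun i => (s i).2) {i : Fin d} (hi : (s i).1 ≠ 0) (j : Fin d) :
    ¬ s j ≤ ((s i).1 - 1, (s i).2) := fun h => by
  have hj : s j ≤ s i := h.trans ⟨Nat.sub_le _ _, le_rfl⟩
  have := eq_of_le_of_strictAnti_of_strictMono h₁ h₂ hj ▸ h.1
  omega

lemma not_le_pred_snd {d : ℕ} {s : Fin d → ℕ × ℕ} (h₁ : StrictAnti fun i => (s i).1)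
    (h₂ : StrictMono fun i => (s i).2) {i : Fin d} (hi : (s i).2 ≠ 0) (j : Fin d) :
    ¬ s j ≤ ((s i).1, (s i).2 - 1) := fun h => by
  have hj : s j ≤ s i := h.trans ⟨le_rfl, Nat.sub_le _ _⟩
  have := eq_of_le_of_strictAnti_of_strictMono h₁ h₂ hj ▸ h.2
  omega

lemma exists_gap_of_forall_not_le {d : ℕ} (hd : 0 < d) {s : Fin d → ℕ × ℕ}
    (hlast : (s ⟨d - 1, Nat.sub_lt hd Nat.one_pos⟩).1 = 0) (hfirst : (s ⟨0, hd⟩).2 = 0)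
    {n : ℕ × ℕ} (hn : ∀ j, ¬ s j ≤ n) :
    ∃ i : Fin d, ∃ h : i.1 + 1 < d, n.1 ≤ (s i).1 - 1 ∧ n.2 ≤ (s ⟨i.1 + 1, h⟩).2 - 1 := by
  classical
  have hex : ∃ k, ∃ hk : k < d, (s ⟨k, hk⟩).1 ≤ n.1 := ⟨d - 1, _, hlast ▸ Nat.zero_le _⟩
  obtain ⟨k, ⟨hk, hkn⟩, hmin⟩ : ∃ k, (∃ hk : k < d, (s ⟨k, hk⟩).1 ≤ n.1) ∧
      ∀ j < k, ¬ ∃ hj : j < d, (s ⟨j, hj⟩).1 ≤ n.1 :=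
    ⟨_, Nat.find_spec hex, fun j => Nat.find_min hex⟩
  rcases k with _ | i
  · exact (hn ⟨0, hd⟩ ⟨hkn, hfirst.le.trans (Nat.zero_le _)⟩).elim
  · refine ⟨⟨i, by omega⟩, hk, ?_, ?_⟩
    · have : ¬ (s ⟨i, by omega⟩).1 ≤ n.1 := fun h => hmin i (Nat.lt_succ_self i) ⟨_, h⟩
      omega
    · have := hn ⟨i + 1, hk⟩
      simp only [Prod.le_def, not_and, not_le] at this
      exact Nat.le_sub_one_of_lt (this hkn)

end Staircase

theorem groebner_from_hyperbolic_graded_general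
    (F : Type) [Field F]
    (L : Type) [Field L] [Algebra F L]
    (r₁ r₂ : ℕ)
    (α₁ α₂ : L) (hα₁ : IsPrimitiveRoot α₁ r₁) (hα₂ : IsPrimitiveRoot α₂ r₂)
    (t : ℕ) (ht4 : t ≤ 4) (htr1 : t ≤ r₁ / 2) (htr2 : t ≤ r₂ / 2)
    (e : Fin r₁ × Fin r₂ → F) (hω : wt e ≤ t) (τ : Fin r₁ × Fin r₂)
    (U : ℕ × ℕ → L) (hU : U = synTable α₁ α₂ τ e)
    (d : ℕ) (hd : 0 < d)
    (f : Fin d → (ℕ × ℕ) →₀ L) (s : Fin d → ℕ × ℕ)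
    (hLP : ∀ i, IsLP grMonOrd (f i) (s i))
    (hdec1 : ∀ i j : Fin d, i < j → (s j).1 < (s i).1)
    (hlast1 : (s ⟨d - 1, Nat.sub_lt hd Nat.one_pos⟩).1 = 0)
    (hinc2 : ∀ i j : Fin d, i < j → (s i).2 < (s j).2)
    (hfirst2 : (s ⟨0, hd⟩).2 = 0)
    (hgen : ∀ i : Fin d, ∀ k ∈ hypB r₁ r₂ (2 * t + 1),
      (s i).1 ≤ k.1 → (s i).2 ≤ k.2 → fApp U (f i) (s i) k = 0)
    (hmin : ∀ (g : (ℕ × ℕ) →₀ L) (sg : ℕ × ℕ), IsLP grMonOrd g sg →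
      (∃ i : Fin d, ∃ h : i.1 + 1 < d,
        sg.1 ≤ (s i).1 - 1 ∧ sg.2 ≤ (s ⟨i.1 + 1, h⟩).2 - 1) →
      ∃ k ∈ hypB r₁ r₂ (2 * t + 1), sg.1 ≤ k.1 ∧ sg.2 ≤ k.2 ∧ fApp U g sg k ≠ 0) :
    (∀ i : Fin d, GeneratesU grMonOrd U (f i)) ∧
    (∀ (g : (ℕ × ℕ) →₀ L) (sg : ℕ × ℕ), IsLP grMonOrd g sg → GeneratesU grMonOrd U g →
      ∃ i : Fin d, (s i).1 ≤ sg.1 ∧ (s i).2 ≤ sg.2) := by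
  classical
  obtain ⟨P, w, hPcard, hw, hsyn⟩ := synTable_eq_expSum hα₁ hα₂ τ e
  set z := fun p : Fin r₁ × Fin r₂ => (α₁ ^ (p.1 : ℕ), α₂ ^ (p.2 : ℕ))
  subst hU
  rw [hsyn] at hgen hmin ⊢
  have hunder : ∀ m, (∀ j, ¬ s j ≤ m) → m ∈ footprint (P.image z) := fun m hm g hg hgm => by
    obtain ⟨i, hi, hgap⟩ := exists_gap_of_forall_not_le hd hlast1 hfirst2 hm
    obtain ⟨k, -, -, -, hk⟩ := hmin g m hgm ⟨i, hi, hgap⟩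
    exact hk (fApp_expSum_eq_zero P z w
      (fun p hp => mem_ker_evalOn.1 hg _ (mem_image_of_mem z hp)) m k)
  have hshift : ∀ i, ∀ n ∈ footprint (P.image z), s i + n ∈ hypB r₁ r₂ (2 * t + 1) :=
    fun i n hn => add_mem_hypB (isLowerSet_footprint _) ht4 (by omega) (by omega)
      (fun S hS => (card_le_of_subset_footprint hS).trans (card_image_le.trans (hPcard ▸ hω)))
      hn (fun h => hunder _ (not_le_pred_fst hdec1 hinc2 h))
      (fun h => hunder _ (not_le_pred_snd hdec1 hinc2 h))
  have hvanish : ∀ i, ∀ p ∈ P, evalAt (z p) (f i) = 0 := fun i p hp =>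
    evalAt_eq_zero_of_fApp_expSum_add_eq_zero P z w (injective_pow_pair hα₁ hα₂).injOn hw
      (fun n hn => hgen i _ (hshift i n hn) (Nat.le_add_right _ _) (Nat.le_add_right _ _)) hp
  refine ⟨fun i => ⟨s i, hLP i, fApp_expSum_eq_zero P z w (hvanish i) (s i)⟩, ?_⟩
  rintro g sg hg ⟨sg', hg', hgen'⟩
  by_contra hnot
  obtain ⟨i, hi, hgap⟩ := exists_gap_of_forall_not_le hd hlast1 hfirst2 fun j h => hnot ⟨j, h⟩
  obtain ⟨k, -, -, -, hk⟩ := hmin g sg hg ⟨i, hi, hgap⟩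
  exact hk (hg'.eq hg ▸ hgen' k)

/-- under the graded order (X₂ > X₁), a minimal set of polynomials
for the subarray of the syndrome table indexed by B(2t+1) is a Gröbner basis of Λ(U). -/
theorem groebner_from_hyperbolic_graded
    (q : ℕ) (hq : IsPrimePow q)
    (F : Type) [Field F] [Fintype F] (hF : Fintype.card F = q)
    (L : Type) [Field L] [Algebra F L]
    (r₁ r₂ : ℕ) (hr₁ : 0 < r₁) (hr₂ : 0 < r₂) (hco : Nat.Coprime q (r₁ * r₂))
    (α₁ α₂ : L) (hα₁ : IsPrimitiveRoot α₁ r₁) (hα₂ : IsPrimitiveRoot α₂ r₂)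
    (t : ℕ) (ht1 : 1 ≤ t) (ht4 : t ≤ 4) (htr1 : t ≤ r₁ / 2) (htr2 : t ≤ r₂ / 2)
    (e : Fin r₁ × Fin r₂ → F) (hω : wt e ≤ t) (τ : Fin r₁ × Fin r₂)
    (U : ℕ × ℕ → L) (hU : U = synTable α₁ α₂ τ e)
    (hnz : ∃ i j : ℕ, i + j = t ∧ U (i, j) ≠ 0)
    (d : ℕ) (hd : 0 < d)
    (f : Fin d → (ℕ × ℕ) →₀ L) (s : Fin d → ℕ × ℕ)
    (hLP : ∀ i, IsLP grMonOrd (f i) (s i))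
    (hdec1 : ∀ i j : Fin d, i < j → (s j).1 < (s i).1)
    (hlast1 : (s ⟨d - 1, Nat.sub_lt hd Nat.one_pos⟩).1 = 0)
    (hinc2 : ∀ i j : Fin d, i < j → (s i).2 < (s j).2)
    (hfirst2 : (s ⟨0, hd⟩).2 = 0)
    (hgen : ∀ i : Fin d, ∀ k ∈ hypB r₁ r₂ (2 * t + 1),
      (s i).1 ≤ k.1 → (s i).2 ≤ k.2 → fApp U (f i) (s i) k = 0)
    (hmin : ∀ (g : (ℕ × ℕ) →₀ L) (sg : ℕ × ℕ), IsLP grMonOrd g sg →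
      (∃ i : Fin d, ∃ h : i.1 + 1 < d,
        sg.1 ≤ (s i).1 - 1 ∧ sg.2 ≤ (s ⟨i.1 + 1, h⟩).2 - 1) →
      ∃ k ∈ hypB r₁ r₂ (2 * t + 1), sg.1 ≤ k.1 ∧ sg.2 ≤ k.2 ∧ fApp U g sg k ≠ 0) :
    (∀ i : Fin d, GeneratesU grMonOrd U (f i)) ∧
    (∀ (g : (ℕ × ℕ) →₀ L) (sg : ℕ × ℕ), IsLP grMonOrd g sg → GeneratesU grMonOrd U g →
      ∃ i : Fin d, (s i).1 ≤ sg.1 ∧ (s i).2 ≤ sg.2) :=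
  groebner_from_hyperbolic_graded_general F L r₁ r₂ α₁ α₂ hα₁ hα₂ t ht4 htr1 htr2 e hω τ U hU d hd f
    s hLP hdec1 hlast1 hinc2 hfirst2 hgen hmin
end

section
/- Let e ∈ 𝔽(r₁,r₂), let τ ∈ 𝓘, and let U be the syndrome table afforded by τ and e. Fix a monomial order ≤_T on ℕ×ℕ. Then the image of Λ(U) under the canonical projection L[X₁,X₂] → L(r₁,r₂) equals the locator ideal L(e); that is, Λ(U)‾ = {f ∈ L(r₁,r₂) : f(α^n) = 0 for all n ∈ supp(e)}. -/
/-!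
Write `x_p = α₁^{p₁}`, `y_p = α₂^{p₂}`. Expanding the syndrome table gives, for `s ⪯ n`,
`f[U]_n = ∑_p e_p f(x_p, y_p) x_p^{τ₁+n₁-s₁} y_p^{τ₂+n₂-s₂}`. So `f` generates `U` when it vanishes
on `supp e`; conversely, if all these sums vanish, then, since `n ↦ τ + n - s` reaches every class
modulo `(r₁, r₂)`, the two-dimensional discrete Fourier transform of `p ↦ e_p f(x_p, y_p)` vanishes,
and that transform is injective (Vandermonde in each variable).
Finally, evaluation at the points `(x_p, y_p)` kills `(X₁^{r₁} - 1, X₂^{r₂} - 1)`, so the condition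
only depends on the class of `f` in `L(r₁, r₂)`.
-/

lemma MonOrd.exists_max (T : MonOrd) {S : Finset (ℕ × ℕ)} (hS : S.Nonempty) :
    ∃ s ∈ S, ∀ m ∈ S, T.le m s := by
  induction hS using Finset.Nonempty.cons_induction with
  | singleton a =>
    exact ⟨a, Finset.mem_singleton_self a, fun m hm => Finset.mem_singleton.1 hm ▸ T.refl a⟩
  | cons a S _ _ ih =>
    obtain ⟨s, hs, hmax⟩ := ih
    simp only [Finset.mem_cons, exists_eq_or_imp, forall_eq_or_imp]
    rcases T.total a s with has | hsa
    · exact .inr ⟨s, hs, has, hmax⟩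
    · exact .inl ⟨T.refl a, fun m hm => T.trans m s a (hmax m hm) hsa⟩

lemma exists_isLP {L : Type} [Field L] (T : MonOrd) {f : (ℕ × ℕ) →₀ L} (hf : f ≠ 0) :
    ∃ s, IsLP T f s :=
  T.exists_max (Finsupp.support_nonempty_iff.2 hf)

noncomputable def evalHom {R : Type} [CommSemiring R] (x y : R) :
    AddMonoidAlgebra R (ℕ × ℕ) →ₐ[R] R :=
  AddMonoidAlgebra.lift R R (ℕ × ℕ)
    { toFun := fun m => x ^ m.toAdd.1 * y ^ m.toAdd.2
      map_one' := by simp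
      map_mul' := fun a b => by
        simp only [toAdd_mul, Prod.fst_add, Prod.snd_add, pow_add]
        ring }

lemma evalHom_apply {L : Type} [Field L] (x y : L) (f : AddMonoidAlgebra L (ℕ × ℕ)) :
    evalHom x y f = polyEval f.coeff x y := by
  simp [evalHom, AddMonoidAlgebra.lift_apply, Finsupp.sum, polyEval, mul_assoc]

lemma periodIdeal_le_ker_evalHom {L : Type} [Field L] {r₁ r₂ : ℕ} {x y : L}
    (hx : x ^ r₁ = 1) (hy : y ^ r₂ = 1) :
    periodIdeal L r₁ r₂ ≤ RingHom.ker (evalHom x y) := by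
  rw [periodIdeal, Ideal.span_le, Set.insert_subset_iff, Set.singleton_subset_iff]
  simp [evalHom, hx, hy]

lemma polyEval_eq_of_mk_eq {L : Type} [Field L] {r₁ r₂ : ℕ} {x y : L}
    (hx : x ^ r₁ = 1) (hy : y ^ r₂ = 1) {f g : AddMonoidAlgebra L (ℕ × ℕ)}
    (hfg : Ideal.Quotient.mk (periodIdeal L r₁ r₂) f = Ideal.Quotient.mk _ g) :
    polyEval f.coeff x y = polyEval g.coeff x y := by
  have := periodIdeal_le_ker_evalHom hx hy (Ideal.Quotient.eq.1 hfg)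
  rwa [RingHom.mem_ker, map_sub, sub_eq_zero, evalHom_apply, evalHom_apply] at this

lemma fApp_synTable {F L : Type} [Field F] [Field L] [Algebra F L] {r₁ r₂ : ℕ}
    (α₁ α₂ : L) (τ : Fin r₁ × Fin r₂) (e : Fin r₁ × Fin r₂ → F)
    (f : (ℕ × ℕ) →₀ L) {s n : ℕ × ℕ} (h₁ : s.1 ≤ n.1) (h₂ : s.2 ≤ n.2) :
    fApp (synTable α₁ α₂ τ e) f s n =
      ∑ p : Fin r₁ × Fin r₂,
        algebraMap F L (e p) * polyEval f (α₁ ^ (p.1 : ℕ)) (α₂ ^ (p.2 : ℕ)) *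
          (α₁ ^ (p.1 : ℕ)) ^ ((τ.1 : ℕ) + n.1 - s.1) *
          (α₂ ^ (p.2 : ℕ)) ^ ((τ.2 : ℕ) + n.2 - s.2) := by
  rw [fApp, if_pos ⟨h₁, h₂⟩]
  simp only [synTable]
  simp_rw [Finset.mul_sum]
  rw [Finset.sum_comm]
  refine Finset.sum_congr rfl fun p _ => ?_
  rw [polyEval, Finset.mul_sum, Finset.sum_mul, Finset.sum_mul]
  refine Finset.sum_congr rfl fun m _ => ?_
  rw [show (τ.1 : ℕ) + (m.1 + n.1 - s.1) = m.1 + ((τ.1 : ℕ) + n.1 - s.1) by omega,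
    show (τ.2 : ℕ) + (m.2 + n.2 - s.2) = m.2 + ((τ.2 : ℕ) + n.2 - s.2) by omega]
  ring

lemma IsPrimitiveRoot.injective_pow_fin {R : Type} [CommRing R] {α : R} {r : ℕ}
    (hα : IsPrimitiveRoot α r) : Function.Injective fun i : Fin r => α ^ (i : ℕ) :=
  fun i j hij => Fin.ext (hα.pow_inj i.isLt j.isLt hij)

lemma eq_zero_of_forall_sum_mul_pow_mul_pow_eq_zero {R : Type} [CommRing R] [IsDomain R]
    {r₁ r₂ : ℕ} {α₁ α₂ : R} (hα₁ : IsPrimitiveRoot α₁ r₁) (hα₂ : IsPrimitiveRoot α₂ r₂)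
    {c : Fin r₁ × Fin r₂ → R}
    (hc : ∀ a : Fin r₁ × Fin r₂, ∑ q : Fin r₁ × Fin r₂,
      c q * (α₁ ^ (q.1 : ℕ)) ^ (a.1 : ℕ) * (α₂ ^ (q.2 : ℕ)) ^ (a.2 : ℕ) = 0) :
    c = 0 := by
  have inner_eq_zero : ∀ (a₁ : Fin r₁) (q₂ : Fin r₂),
      ∑ q₁ : Fin r₁, c (q₁, q₂) * (α₁ ^ (q₁ : ℕ)) ^ (a₁ : ℕ) = 0 := by
    intro a₁
    refine congrFun (Matrix.eq_zero_of_forall_pow_sum_mul_pow_eq_zero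
      (v := fun q₂ => ∑ q₁ : Fin r₁, c (q₁, q₂) * (α₁ ^ (q₁ : ℕ)) ^ (a₁ : ℕ))
      hα₂.injective_pow_fin fun a₂ => ?_)
    rw [← hc (a₁, a₂), Fintype.sum_prod_type_right]
    simp only [Finset.sum_mul]
  funext ⟨q₁, q₂⟩
  exact congrFun (Matrix.eq_zero_of_forall_pow_sum_mul_pow_eq_zero
    hα₁.injective_pow_fin fun a₁ => inner_eq_zero a₁ q₂) q₁

section SyndromeTable

variable {F L : Type} [Field F] [Field L] [Algebra F L] {r₁ r₂ : ℕ} {α₁ α₂ : L}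
  (τ : Fin r₁ × Fin r₂) (e : Fin r₁ × Fin r₂ → F) {f : (ℕ × ℕ) →₀ L}

lemma fApp_synTable_eq_zero_of_vanishing
    (hf : ∀ p : Fin r₁ × Fin r₂, e p ≠ 0 → polyEval f (α₁ ^ (p.1 : ℕ)) (α₂ ^ (p.2 : ℕ)) = 0)
    (s n : ℕ × ℕ) : fApp (synTable α₁ α₂ τ e) f s n = 0 := by
  by_cases hsn : s.1 ≤ n.1 ∧ s.2 ≤ n.2
  · rw [fApp_synTable α₁ α₂ τ e f hsn.1 hsn.2]
    refine Finset.sum_eq_zero fun p _ => ?_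
    rcases eq_or_ne (e p) 0 with hp | hp <;> simp [hp, hf]
  · rw [fApp, if_neg hsn]

lemma generatesU_synTable_of_vanishing (T : MonOrd) (hf₀ : f ≠ 0)
    (hf : ∀ p : Fin r₁ × Fin r₂, e p ≠ 0 → polyEval f (α₁ ^ (p.1 : ℕ)) (α₂ ^ (p.2 : ℕ)) = 0) :
    GeneratesU T (synTable α₁ α₂ τ e) f :=
  let ⟨s, hs⟩ := exists_isLP T hf₀
  ⟨s, hs, fApp_synTable_eq_zero_of_vanishing τ e hf s⟩

lemma polyEval_eq_zero_of_forall_fApp_synTable_eq_zero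
    (hα₁ : IsPrimitiveRoot α₁ r₁) (hα₂ : IsPrimitiveRoot α₂ r₂) {s : ℕ × ℕ}
    (hf : ∀ n, fApp (synTable α₁ α₂ τ e) f s n = 0)
    {p : Fin r₁ × Fin r₂} (hp : e p ≠ 0) :
    polyEval f (α₁ ^ (p.1 : ℕ)) (α₂ ^ (p.2 : ℕ)) = 0 := by
  have hc := eq_zero_of_forall_sum_mul_pow_mul_pow_eq_zero hα₁ hα₂
    (c := fun p => algebraMap F L (e p) * polyEval f (α₁ ^ (p.1 : ℕ)) (α₂ ^ (p.2 : ℕ)))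
    fun a => by
      -- `n = s + (a + r - τ)` gives the exponent `a + r ≡ a`; the `+ r` keeps `- τ` from truncating
      have hn := hf (s.1 + (a.1 + r₁ - τ.1), s.2 + (a.2 + r₂ - τ.2))
      rw [fApp_synTable α₁ α₂ τ e f (by simp) (by simp)] at hn
      rw [← hn]
      refine Finset.sum_congr rfl fun q _ => ?_
      rw [show (τ.1 : ℕ) + (s.1 + (a.1 + r₁ - τ.1)) - s.1 = a.1 + r₁ by omega,
        show (τ.2 : ℕ) + (s.2 + (a.2 + r₂ - τ.2)) - s.2 = a.2 + r₂ by omega,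
        pow_add, pow_add, pow_right_comm _ _ r₁, pow_right_comm _ _ r₂,
        hα₁.pow_eq_one, hα₂.pow_eq_one, one_pow, one_pow, mul_one, mul_one]
  simpa [hp] using congrFun hc p

end SyndromeTable

theorem projection_of_lambda_eq_locator_general
    (F : Type) [Field F]
    (L : Type) [Field L] [Algebra F L]
    (r₁ r₂ : ℕ)
    (α₁ α₂ : L) (hα₁ : IsPrimitiveRoot α₁ r₁) (hα₂ : IsPrimitiveRoot α₂ r₂)
    (T : MonOrd) (e : Fin r₁ × Fin r₂ → F) (τ : Fin r₁ × Fin r₂)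
    (U : ℕ × ℕ → L) (hU : U = synTable α₁ α₂ τ e) :
    Ideal.Quotient.mk (periodIdeal L r₁ r₂) ''
        {f : AddMonoidAlgebra L (ℕ × ℕ) | GeneratesU T U f.coeff ∨ f = 0} =
      {g : AddMonoidAlgebra L (ℕ × ℕ) ⧸ periodIdeal L r₁ r₂ |
        ∀ h : AddMonoidAlgebra L (ℕ × ℕ), Ideal.Quotient.mk (periodIdeal L r₁ r₂) h = g →
          ∀ p : Fin r₁ × Fin r₂, e p ≠ 0 →
            polyEval h.coeff (α₁ ^ (p.1 : ℕ)) (α₂ ^ (p.2 : ℕ)) = 0} := by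
  subst hU
  ext g
  constructor
  · rintro ⟨f, hf, rfl⟩ h hfh p hp
    rw [polyEval_eq_of_mk_eq (x := α₁ ^ (p.1 : ℕ)) (y := α₂ ^ (p.2 : ℕ))
      (by rw [pow_right_comm, hα₁.pow_eq_one, one_pow])
      (by rw [pow_right_comm, hα₂.pow_eq_one, one_pow]) hfh]
    rcases hf with ⟨s, -, hs⟩ | rfl
    · exact polyEval_eq_zero_of_forall_fApp_synTable_eq_zero τ e hα₁ hα₂ hs hp
    · simp [polyEval]
  · intro hg
    obtain ⟨h, rfl⟩ := Ideal.Quotient.mk_surjective g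
    refine ⟨h, ?_, rfl⟩
    rcases eq_or_ne h 0 with rfl | hh
    · exact .inr rfl
    · exact .inl (generatesU_synTable_of_vanishing τ e T
        (AddMonoidAlgebra.coeff_eq_zero.not.2 hh) (hg h rfl))

/-- the image of Λ(U) under the canonical projection
L[X₁,X₂] → L(r₁,r₂) equals the locator ideal L(e). -/
theorem projection_of_lambda_eq_locator
    (q : ℕ) (hq : IsPrimePow q)
    (F : Type) [Field F] [Fintype F] (hF : Fintype.card F = q)
    (L : Type) [Field L] [Algebra F L]
    (r₁ r₂ : ℕ) (hr₁ : 0 < r₁) (hr₂ : 0 < r₂) (hco : Nat.Coprime q (r₁ * r₂))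
    (α₁ α₂ : L) (hα₁ : IsPrimitiveRoot α₁ r₁) (hα₂ : IsPrimitiveRoot α₂ r₂)
    (T : MonOrd) (e : Fin r₁ × Fin r₂ → F) (τ : Fin r₁ × Fin r₂)
    (U : ℕ × ℕ → L) (hU : U = synTable α₁ α₂ τ e) :
    Ideal.Quotient.mk (periodIdeal L r₁ r₂) ''
        {f : AddMonoidAlgebra L (ℕ × ℕ) | GeneratesU T U f.coeff ∨ f = 0} =
      {g : AddMonoidAlgebra L (ℕ × ℕ) ⧸ periodIdeal L r₁ r₂ |
        ∀ h : AddMonoidAlgebra L (ℕ × ℕ), Ideal.Quotient.mk (periodIdeal L r₁ r₂) h = g →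
          ∀ p : Fin r₁ × Fin r₂, e p ≠ 0 →
            polyEval h.coeff (α₁ ^ (p.1 : ℕ)) (α₂ ^ (p.2 : ℕ)) = 0} :=
  projection_of_lambda_eq_locator_general F L r₁ r₂ α₁ α₂ hα₁ hα₂ T e τ U hU
end
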